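/- arXiv:1903.03708 — 3 statements merged into one kernel-verified Lean document; each statement's English description precedes it below -/
import Mathlib

section
/- Let c_n be defined by c_0 = 0 and c_n = (n-1) + (2/n)·∑_{k=0}^{n-1} c_k for n ≥ 1. Then for all n ≥ 1, c_n = 2(n+1)H_n − 4n, where H_n = ∑_{i=1}^{n} 1/i. -/
/-!
The recurrence determines `c` uniquely by strong induction, so it suffices to check that
`2 (n + 1) H_n - 4 n` satisfies it. That in turn reduces to the closed form
`∑_{k<n} (2 (k + 1) H_k - 4 k) = n (2 (n + 1) H_n - 5 n + 1) / 2`, proved by induction on `n`.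
-/

open Finset

def quicksortMean (n : ℕ) : ℚ := 2 * ((n : ℚ) + 1) * harmonic n - 4 * n

lemma sum_range_quicksortMean (n : ℕ) :
    ∑ k ∈ range n, quicksortMean k = n * (2 * ((n : ℚ) + 1) * harmonic n - 5 * n + 1) / 2 := by
  induction n with
  | zero => simp
  | succ n ih =>
    rw [sum_range_succ, ih, harmonic_succ, quicksortMean]
    have hn : ((n + 1 : ℕ) : ℚ) ≠ 0 := by positivity
    field_simp
    push_cast
    ring

lemma quicksortMean_eq_rec {n : ℕ} (hn : 1 ≤ n) :
    quicksortMean n = ((n : ℚ) - 1) + (2 / (n : ℚ)) * ∑ k ∈ range n, quicksortMean k := by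
  have hn₀ : (n : ℚ) ≠ 0 := by positivity
  rw [sum_range_quicksortMean, quicksortMean]
  field_simp
  ring

lemma eq_quicksortMean_of_rec (c : ℕ → ℚ) (hc0 : c 0 = 0)
    (hcrec : ∀ n : ℕ, 1 ≤ n → c n = ((n : ℚ) - 1) + (2 / (n : ℚ)) * ∑ k ∈ range n, c k)
    (n : ℕ) : c n = quicksortMean n := by
  induction n using Nat.strong_induction_on with
  | _ n ih =>
    rcases Nat.eq_zero_or_pos n with rfl | hn
    · simp [hc0, quicksortMean]
    · rw [hcrec n hn, quicksortMean_eq_rec hn, sum_congr rfl fun k hk => ih k (mem_range.mp hk)]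

theorem quicksort_mean_closed_form
    (c : ℕ → ℚ)
    (hc0 : c 0 = 0)
    (hcrec : ∀ n : ℕ, 1 ≤ n →
      c n = ((n : ℚ) - 1) + (2 / (n : ℚ)) * ∑ k ∈ Finset.range n, c k)
    (H : ℕ → ℕ → ℚ)
    (hH : ∀ p n : ℕ, H p n = ∑ i ∈ Finset.Icc 1 n, 1 / (i : ℚ) ^ p) :
    ∀ n : ℕ, 1 ≤ n → c n = 2 * ((n : ℚ) + 1) * H 1 n - 4 * (n : ℚ) := by
  intro n _
  have hH1 : H 1 n = harmonic n := by simp [hH, harmonic_eq_sum_Icc]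
  rw [eq_quicksortMean_of_rec c hc0 hcrec n, hH1, quicksortMean]
end

section
/- Let c_n be defined by c_0 = 0 and c_n = (n-1) + (2/n)·∑_{k=0}^{n-1} c_k for n ≥ 1. Then c_n/(n·log n) tends to 2 as n → ∞; in particular c_n = O(n log n). -/
open Filter Real Finset Polynomial Asymptotics

/-!
Multiplying the recurrence by `n` and subtracting consecutive instances eliminates the sum and
leaves `(n + 1) c (n + 1) = (n + 2) c n + 2 n`; dividing by `(n + 1)(n + 2)` telescopes to the
closed form `c n = 2 (n + 1) H n - 4 n` with `H n` the harmonic numbers. Since `H n - log n`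
converges (to the Euler–Mascheroni constant), `H n ~ log n`, whence `c n ~ 2 n log n`.
-/

lemma succ_mul_eq_of_quicksort_rec {c : ℕ → ℚ}
    (hcrec : ∀ n : ℕ, 1 ≤ n →
      c n = ((n : ℚ) - 1) + (2 / (n : ℚ)) * ∑ k ∈ Finset.range n, c k)
    {n : ℕ} (hn : 1 ≤ n) :
    ((n : ℚ) + 1) * c (n + 1) = ((n : ℚ) + 2) * c n + 2 * n := by
  have hn0 : (n : ℚ) ≠ 0 := by positivity
  have hprev : (n : ℚ) * c n = n * (n - 1) + 2 * ∑ k ∈ range n, c k := by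
    rw [hcrec n hn]; field_simp
  have hnext : ((n : ℚ) + 1) * c (n + 1) = (n + 1) * n + 2 * ∑ k ∈ range n, c k + 2 * c n := by
    rw [hcrec (n + 1) (by omega), sum_range_succ]; push_cast; field_simp; ring
  linear_combination hnext - hprev

lemma eq_harmonic_of_quicksort_rec {c : ℕ → ℚ} (hc0 : c 0 = 0)
    (hcrec : ∀ n : ℕ, 1 ≤ n →
      c n = ((n : ℚ) - 1) + (2 / (n : ℚ)) * ∑ k ∈ Finset.range n, c k)
    (n : ℕ) : c n = 2 * ((n : ℚ) + 1) * harmonic n - 4 * n := by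
  induction n with
  | zero => simp [hc0]
  | succ m ih =>
    rcases Nat.eq_zero_or_pos m with rfl | hm
    · have hc1 := hcrec 1 le_rfl
      norm_num [hc0] at hc1 ⊢
      exact hc1
    · have hstep := succ_mul_eq_of_quicksort_rec hcrec hm
      rw [ih] at hstep
      rw [harmonic_succ]
      push_cast
      field_simp
      linear_combination hstep

lemma tendsto_harmonic_div_log :
    Tendsto (fun n : ℕ => (harmonic n : ℝ) / log n) atTop (nhds 1) := by
  have hlog : Tendsto (fun n : ℕ => log n) atTop atTop :=
    tendsto_log_atTop.comp tendsto_natCast_atTop_atTop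
  have h := (tendsto_harmonic_sub_log.div_atTop hlog).add_const 1
  rw [zero_add] at h
  refine h.congr' ?_
  filter_upwards [hlog.eventually_gt_atTop 0] with n hn
  field_simp
  ring

lemma tendsto_quicksort_closed_form_div :
    Tendsto (fun n : ℕ => (2 * ((n : ℝ) + 1) * harmonic n - 4 * n) / (n * log n))
      atTop (nhds 2) := by
  have hlog : Tendsto (fun n : ℕ => log n) atTop atTop :=
    tendsto_log_atTop.comp tendsto_natCast_atTop_atTop
  have h := ((tendsto_one_div_atTop_nhds_zero_nat.const_add 1).const_mul 2).mul
    tendsto_harmonic_div_log |>.sub ((tendsto_const_nhds (x := (4 : ℝ))).div_atTop hlog)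
  norm_num at h
  refine h.congr' ?_
  filter_upwards [hlog.eventually_gt_atTop 0, eventually_gt_atTop 0] with n hlogn hn
  have : (n : ℝ) ≠ 0 := by positivity
  field_simp

theorem quicksort_mean_asymptotics
    (c : ℕ → ℚ)
    (hc0 : c 0 = 0)
    (hcrec : ∀ n : ℕ, 1 ≤ n →
      c n = ((n : ℚ) - 1) + (2 / (n : ℚ)) * ∑ k ∈ Finset.range n, c k) :
    Filter.Tendsto (fun n : ℕ => (c n : ℝ) / ((n : ℝ) * Real.log n))
      Filter.atTop (nhds 2) ∧
    (fun n : ℕ => (c n : ℝ)) =O[Filter.atTop]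
      (fun n : ℕ => (n : ℝ) * Real.log n) := by
  have hc : ∀ n, (c n : ℝ) = 2 * ((n : ℝ) + 1) * harmonic n - 4 * n := fun n => by
    rw [eq_harmonic_of_quicksort_rec hc0 hcrec n]; push_cast; ring
  have hlim : Tendsto (fun n : ℕ => (c n : ℝ) / ((n : ℝ) * log n)) atTop (nhds 2) := by
    simpa only [hc] using tendsto_quicksort_closed_form_div
  refine ⟨hlim, isBigO_of_div_tendsto_nhds ?_ 2 hlim⟩
  filter_upwards [eventually_gt_atTop 1] with n hn hzero
  have hn' : (1 : ℝ) < n := by exact_mod_cast hn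
  exact absurd hzero (mul_pos (by positivity) (log_pos hn')).ne'
end

section
/- Define polynomials g_n ∈ ℚ[t] by g_0 = 1 and, for n ≥ 1, n·g_n(t) = t^{n-1}·∑_{k=1}^{n} g_{k-1}(t)·g_{n-k}(t). Then for all n ≥ 1 the mean μ_n = g_n'(1) equals 2(n+1)H_n − 4n, where H_n = ∑_{i=1}^{n} 1/i. -/
/-!
Evaluating the recurrence at `t = 1` shows inductively that `gₙ(1) = 1`. Differentiating it at
`t = 1` then gives `n μₙ = n (n - 1) + 2 ∑_{j < n} μⱼ`, since both halves of the derivative of the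
convolution sum to `∑_{j < n} μⱼ`. Subtracting two consecutive instances yields the first-order
recurrence `(n + 1) μₙ₊₁ = (n + 2) μₙ + 2 n`, which `2 (n + 1) Hₙ - 4 n` satisfies.
-/

open Finset Polynomial

theorem Finset.sum_Icc_one_pred_sub_eq_sum_antidiagonal {M : Type*} [AddCommMonoid M]
    (f : ℕ → ℕ → M) (m : ℕ) :
    ∑ k ∈ Icc 1 (m + 1), f (k - 1) (m + 1 - k) = ∑ p ∈ antidiagonal m, f p.1 p.2 := by
  rw [Nat.sum_antidiagonal_eq_sum_range_succ, ← Ico_add_one_right_eq_Icc, sum_Ico_eq_sum_range]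
  refine sum_congr (by simp) fun k _ => ?_
  congr 1 <;> omega

/-- The quicksort recurrence, shifted to `n = m + 1` so that it is a convolution over the
antidiagonal. -/
def IsQuicksortPGF {K : Type*} [Field K] (g : ℕ → K[X]) : Prop :=
  g 0 = 1 ∧ ∀ m : ℕ, (m + 1 : K) • g (m + 1) = X ^ m * ∑ p ∈ antidiagonal m, g p.1 * g p.2

namespace IsQuicksortPGF

variable {K : Type*} [Field K] [CharZero K] {g : ℕ → K[X]}

theorem eval_one (hg : IsQuicksortPGF g) (n : ℕ) : (g n).eval 1 = 1 := by
  induction n using Nat.strong_induction_on with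
  | _ n ih =>
    obtain _ | m := n
    · simp [hg.1]
    have hsum : ∑ p ∈ antidiagonal m, (g p.1).eval 1 * (g p.2).eval 1 = (m + 1 : K) := by
      rw [sum_congr rfl fun p hp => by
        have := mem_antidiagonal.1 hp
        rw [ih p.1 (by omega), ih p.2 (by omega), one_mul]]
      simp
    have h := congrArg (eval 1) (hg.2 m)
    simp only [eval_smul, eval_mul, eval_pow, eval_X, one_pow, one_mul, eval_finsetSum, hsum,
      smul_eq_mul] at h
    exact (mul_eq_left₀ (by exact_mod_cast m.succ_ne_zero)).1 h

theorem derivative_eval_one_succ (hg : IsQuicksortPGF g) (m : ℕ) :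
    (m + 1 : K) * (g (m + 1)).derivative.eval 1
      = m * (m + 1) + 2 * ∑ i ∈ range (m + 1), (g i).derivative.eval 1 := by
  have h := congrArg (fun p => p.derivative.eval 1) (hg.2 m)
  simp only [derivative_smul, derivative_mul, derivative_X_pow, derivative_sum, eval_smul,
    eval_add, eval_mul, eval_pow, eval_X, eval_finsetSum, eval_C, one_pow, mul_one, one_mul,
    hg.eval_one, smul_eq_mul, sum_add_distrib] at h
  have hswap : ∑ p ∈ antidiagonal m, (g p.2).derivative.eval 1
      = ∑ p ∈ antidiagonal m, (g p.1).derivative.eval 1 :=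
    Nat.sum_antidiagonal_swap (f := fun p => (g p.1).derivative.eval 1)
  rw [h, hswap, Nat.sum_antidiagonal_eq_sum_range_succ (fun i _ => (g i).derivative.eval 1)]
  simp only [sum_const, Nat.card_antidiagonal, nsmul_eq_mul, Nat.cast_add, Nat.cast_one, mul_one]
  ring

end IsQuicksortPGF

section SumRecurrence

variable {a : ℕ → ℚ} (h0 : a 0 = 0)
  (h : ∀ m : ℕ, (m + 1) * a (m + 1) = m * (m + 1) + 2 * ∑ i ∈ range (m + 1), a i)
include h0 h

theorem succ_mul_eq_of_sum_rec (n : ℕ) : (n + 1) * a (n + 1) = (n + 2) * a n + 2 * n := by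
  obtain _ | m := n
  · simpa [h0] using h 0
  · have h₁ := h (m + 1)
    rw [sum_range_succ] at h₁
    push_cast at h₁ ⊢
    linarith [h m]

theorem eq_two_mul_harmonic_of_sum_rec (n : ℕ) : a n = 2 * (n + 1) * harmonic n - 4 * n := by
  induction n with
  | zero => simp [h0]
  | succ n ih =>
    have hstep := succ_mul_eq_of_sum_rec h0 h n
    rw [ih] at hstep
    rw [harmonic_succ]
    field_simp
    push_cast at hstep ⊢
    linear_combination hstep

end SumRecurrence

theorem quicksort_pgf_mean
    (g : ℕ → Polynomial ℚ)
    (hg0 : g 0 = 1)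
    (hgrec : ∀ n : ℕ, 1 ≤ n →
      (n : ℚ) • g n = Polynomial.X ^ (n - 1) *
        ∑ k ∈ Finset.Icc 1 n, g (k - 1) * g (n - k))
    (μ : ℕ → ℚ)
    (hμ : ∀ n, μ n = (Polynomial.derivative (g n)).eval 1)
    (H : ℕ → ℕ → ℚ)
    (hH : ∀ p n : ℕ, H p n = ∑ i ∈ Finset.Icc 1 n, 1 / (i : ℚ) ^ p) :
    ∀ n : ℕ, 1 ≤ n → μ n = 2 * ((n : ℚ) + 1) * H 1 n - 4 * (n : ℚ) := by
  intro n _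
  have hg : IsQuicksortPGF g := by
    refine ⟨hg0, fun m => ?_⟩
    have h := hgrec (m + 1) m.succ_pos
    rwa [Nat.add_sub_cancel, Nat.cast_succ,
      sum_Icc_one_pred_sub_eq_sum_antidiagonal (fun i j => g i * g j)] at h
  have hH1 : H 1 n = harmonic n := by simp [hH, harmonic_eq_sum_Icc]
  have hμ0 : μ 0 = 0 := by simp [hμ, hg0]
  rw [hH1]
  exact eq_two_mul_harmonic_of_sum_rec hμ0
    (fun m => by simpa only [hμ] using hg.derivative_eval_one_succ m) n
end
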